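/- arXiv:1704.09013 — 5 statements merged into one kernel-verified Lean document; each statement's English description precedes it below -/
import Mathlib

section
/- The twisted Burnside–Frobenius theorem holds for finite groups: for any endomorphism φ of a finite group G, the Reidemeister number R(φ) equals the number of equivalence classes [ρ] of irreducible complex representations of G such that ρ∘φ is equivalent to ρ. -/
def twistedConj {G : Type*} [Group G] (φ : G →* G) (a b : G) : Prop :=
  ∃ x : G, a = x * b * (φ x)⁻¹

def RepIsIrreducible {G : Type*} [Group G] {V : Type*} [AddCommGroup V] [Module ℂ V]
    (ρ : Representation ℂ G V) : Prop :=
  Nontrivial V ∧ ∀ p : Submodule ℂ V, (∀ g : G, ∀ v ∈ p, ρ g v ∈ p) → p = ⊥ ∨ p = ⊤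

/-- A bundled irreducible finite-dimensional complex representation of `G`. -/
structure IrrFRep (G : Type) [Group G] where
  V : Type
  [addGrp : AddCommGroup V]
  [mod : Module ℂ V]
  [fd : FiniteDimensional ℂ V]
  ρ : Representation ℂ G V
  irr : RepIsIrreducible ρ

attribute [instance] IrrFRep.addGrp IrrFRep.mod IrrFRep.fd

/-- Equivalence of representations. -/
def repEquivRel {G : Type} [Group G] (X Y : IrrFRep G) : Prop :=
  ∃ T : X.V ≃ₗ[ℂ] Y.V, ∀ (g : G) (v : X.V), T (X.ρ g v) = Y.ρ g (T v)

/-!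
Burnside's lemma for the action `x • g = x * g * (φ x)⁻¹` gives
`R(φ) * |G| = ∑ x, #{g | g * φ x * g⁻¹ = x}`. By column orthogonality each summand is
`∑ [ρ], χ_ρ (φ x) * χ_ρ x⁻¹`, and summing over `x` first produces `|G| * dim Hom_G(ρ, ρ ∘ φ)`.
Since `ρ` and `ρ ∘ φ` live on the same space, Schur's lemma makes a nonzero intertwiner
`ρ → ρ ∘ φ` bijective, so this dimension is `1` if `ρ ∘ φ ≅ ρ` and `0` otherwise.

Column orthogonality follows from completeness of the irreducible characters: for a class
function `f` orthogonal to all of them, `∑ g, f g • ρ g` is a traceless scalar on every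
irreducible `ρ`, so `∑ g, f g • g ∈ ℂ[G]` kills every simple left ideal of the semisimple ring
`ℂ[G]`, hence is zero.
-/

open Representation Module Finset
open scoped MonoidAlgebra

namespace Representation

section Equivalence

variable {G H k V W : Type*} [Monoid G] [Monoid H] [Semiring k] [AddCommMonoid V] [Module k V]
  [AddCommMonoid W] [Module k W] {ρ : Representation k G V} {σ : Representation k G W}

theorem nonempty_equiv_iff :
    Nonempty (ρ.Equiv σ) ↔ ∃ T : V ≃ₗ[k] W, ∀ g v, T (ρ g v) = σ g (T v) :=
  ⟨fun ⟨e⟩ => ⟨e.toLinearEquiv, e.toIntertwiningMap.isIntertwining⟩,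
    fun ⟨T, hT⟩ => ⟨Equiv.mk T fun g => LinearMap.ext (hT g)⟩⟩

def Equiv.comp (e : ρ.Equiv σ) (φ : H →* G) : Representation.Equiv (ρ.comp φ) (σ.comp φ) :=
  .mk e.toLinearEquiv fun h => e.isIntertwining' (φ h)

end Equivalence

section Irreducible

variable {G k V W : Type*} [Monoid G] [Field k] [AddCommGroup V] [Module k V]
  [AddCommGroup W] [Module k W] {ρ : Representation k G V} {σ : Representation k G W}

theorem IsIrreducible.nontrivial [ρ.IsIrreducible] : Nontrivial V := by
  by_contra h
  rw [not_nontrivial_iff_subsingleton] at h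
  exact bot_ne_top (α := Subrepresentation ρ) (Subrepresentation.ext (Subsingleton.elim _ _))

variable [FiniteDimensional k V] [FiniteDimensional k W]

theorem IsIrreducible.subsingleton_intertwiningMap_of_finrank_eq [ρ.IsIrreducible]
    (hdim : finrank k W = finrank k V) (h : IsEmpty (ρ.Equiv σ)) :
    Subsingleton (ρ.IntertwiningMap σ) := by
  refine ⟨fun f f' => sub_eq_zero.mp ((injective_or_eq_zero (f - f')).resolve_left fun hinj => ?_)⟩
  have hsurj := (LinearMap.injective_iff_surjective_of_finrank_eq_finrank hdim.symm).mp hinj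
  exact h.false ((f - f').ofBijective ⟨hinj, hsurj⟩)

theorem IsIrreducible.eq_zero_of_trace_eq_zero [IsAlgClosed k] [CharZero k] [ρ.IsIrreducible]
    (f : ρ.IntertwiningMap ρ) (hf : LinearMap.trace k V f.toLinearMap = 0) : f = 0 := by
  obtain ⟨c, rfl⟩ := algebraMap_intertwiningMap_bijective_of_isAlgClosed.2 f
  have := IsIrreducible.nontrivial (ρ := ρ)
  have hone : (1 : ρ.IntertwiningMap ρ).toLinearMap = LinearMap.id := rfl
  simp only [Algebra.algebraMap_eq_smul_one, IntertwiningMap.toLinearMap_smul, hone, map_smul,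
    LinearMap.trace_id, smul_eq_mul, mul_eq_zero, Nat.cast_eq_zero, finrank_pos.ne', or_false] at hf
  simp [hf]

end Irreducible

section Orthogonality

variable {G k V W : Type*} [Group G] [Fintype G] [Field k] [IsAlgClosed k]
  [Invertible (Nat.card G : k)] [AddCommGroup V] [Module k V] [FiniteDimensional k V]
  [AddCommGroup W] [Module k W] [FiniteDimensional k W]
  (ρ : Representation k G V) (σ : Representation k G W)

open scoped Classical in
theorem card_inv_mul_sum_char_mul_char_of_finrank_eq [ρ.IsIrreducible]
    (hdim : finrank k W = finrank k V) :
    (Nat.card G : k)⁻¹ * ∑ g, σ.character g * ρ.character g⁻¹ =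
      if Nonempty (σ.Equiv ρ) then 1 else 0 := by
  split_ifs with h
  · obtain ⟨e⟩ := h
    rw [← char_iso e.symm, card_inv_mul_sum_char_mul_char_eq_finrank,
      IsIrreducible.finrank_intertwiningMap_self, Nat.cast_one]
  · have := IsIrreducible.subsingleton_intertwiningMap_of_finrank_eq hdim ⟨fun e => h ⟨e.symm⟩⟩
    rw [card_inv_mul_sum_char_mul_char_eq_finrank, finrank_zero_of_subsingleton, Nat.cast_zero]

end Orthogonality

theorem sum_smul_comp_of_conj_invariant {G k V : Type*} [Group G] [Fintype G] [CommSemiring k]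
    [AddCommMonoid V] [Module k V] (ρ : Representation k G V) (f : G → k)
    (hf : ∀ g h, f (h * g * h⁻¹) = f g) (h : G) :
    (∑ g, f g • ρ g) ∘ₗ ρ h = ρ h ∘ₗ ∑ g, f g • ρ g := by
  ext v
  simp only [LinearMap.comp_apply, LinearMap.coe_sum, Finset.sum_apply, LinearMap.smul_apply,
    map_sum, map_smul]
  refine Fintype.sum_equiv (MulAut.conj h⁻¹).toEquiv _ _ fun g => ?_
  simp [← hf g h⁻¹, ← Module.End.mul_apply, ← map_mul, mul_assoc]

theorem sum_smul_eq_zero_of_sum_mul_character_eq_zero {G k V : Type*} [Group G] [Fintype G]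
    [Field k] [IsAlgClosed k] [CharZero k] [AddCommGroup V] [Module k V] [FiniteDimensional k V]
    (ρ : Representation k G V) [ρ.IsIrreducible] (f : G → k) (hf : ∀ g h, f (h * g * h⁻¹) = f g)
    (h0 : ∑ g, f g * ρ.character g = 0) : ∑ g, f g • ρ g = 0 :=
  congrArg IntertwiningMap.toLinearMap <| IsIrreducible.eq_zero_of_trace_eq_zero
    ⟨∑ g, f g • ρ g, ρ.sum_smul_comp_of_conj_invariant f hf⟩ (by simpa [map_sum, character] using h0)

theorem asAlgebraHom_ofModule'_apply {k G M : Type*} [CommSemiring k] [Monoid G]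
    [AddCommMonoid M] [Module k M] [Module k[G] M] [IsScalarTower k k[G] M] (z : k[G]) (m : M) :
    (ofModule' M).asAlgebraHom z m = z • m := by
  simp [ofModule', asAlgebraHom]

end Representation

theorem RepIsIrreducible.isIrreducible {G V : Type*} [Group G] [AddCommGroup V] [Module ℂ V]
    {ρ : Representation ℂ G V} (h : RepIsIrreducible ρ) : ρ.IsIrreducible := by
  obtain ⟨hV, h⟩ := h
  refine { exists_pair_ne := ⟨⊥, ⊤, fun h' => ?_⟩, eq_bot_or_eq_top := fun p => ?_ }
  · obtain ⟨v, hv⟩ := exists_ne (0 : V)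
    exact hv (SetLike.ext_iff.mp h' v |>.mpr trivial)
  · exact (h p.toSubmodule p.apply_mem_toSubmodule).imp
      (Subrepresentation.toSubmodule_injective ·) (Subrepresentation.toSubmodule_injective ·)

theorem repIsIrreducible_ofModule' {G M : Type*} [Group G] [AddCommGroup M] [Module ℂ M]
    [Module ℂ[G] M] [IsScalarTower ℂ ℂ[G] M] [IsSimpleModule ℂ[G] M] :
    RepIsIrreducible (ofModule' (k := ℂ) (G := G) M) := by
  refine ⟨IsSimpleModule.nontrivial ℂ[G] M, fun p hp => ?_⟩
  let q : Submodule ℂ[G] M :=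
    { p with
      smul_mem' := fun r m hm => by
        induction r using MonoidAlgebra.induction_linear with
        | zero => simp
        | add x y hx hy => rw [add_smul]; exact p.add_mem hx hy
        | single g a =>
          rw [← mul_one a, ← MonoidAlgebra.smul_single', smul_assoc]
          simpa [ofModule'] using p.smul_mem a (hp g m hm) }
  refine (eq_bot_or_eq_top q).imp (fun h => ?_) (fun h => ?_) <;>
    exact Submodule.ext fun m => SetLike.ext_iff.mp h m

theorem IsSemisimpleRing.eq_zero_of_forall_isSimpleModule_mul_eq_zero {R : Type*} [Ring R]
    [IsSemisimpleRing R] (u : R)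
    (h : ∀ I : Submodule R R, IsSimpleModule R I → ∀ x ∈ I, u * x = 0) : u = 0 := by
  have hone : (1 : R) ∈ sSup {I : Submodule R R | IsSimpleModule R I} := by
    rw [IsSemisimpleModule.sSup_simples_eq_top]
    trivial
  rw [sSup_eq_iSup'] at hone
  simpa using Submodule.iSup_induction _ (motive := fun x => u * x = 0) hone
    (fun I => h I.1 I.2) (mul_zero u) fun x y hx hy => by rw [mul_add, hx, hy, add_zero]

namespace IrrFRep

variable {G : Type} [Group G]

instance (X : IrrFRep G) : X.ρ.IsIrreducible := X.irr.isIrreducible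

theorem repEquivRel_iff {X Y : IrrFRep G} : repEquivRel X Y ↔ Nonempty (X.ρ.Equiv Y.ρ) :=
  nonempty_equiv_iff.symm

theorem repEquivRel_equivalence : Equivalence (repEquivRel (G := G)) where
  refl X := repEquivRel_iff.2 ⟨.refl X.ρ⟩
  symm h := repEquivRel_iff.2 ⟨(Classical.choice (repEquivRel_iff.1 h)).symm⟩
  trans h h' := repEquivRel_iff.2
    ⟨(Classical.choice (repEquivRel_iff.1 h)).trans (Classical.choice (repEquivRel_iff.1 h'))⟩

theorem mk_eq_mk_iff {X Y : IrrFRep G} :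
    Quot.mk repEquivRel X = Quot.mk repEquivRel Y ↔ repEquivRel X Y :=
  Quot.eq.trans repEquivRel_equivalence.eqvGen_iff

noncomputable def ofSimpleModule (M : Type) [AddCommGroup M] [Module ℂ M] [FiniteDimensional ℂ M]
    [Module ℂ[G] M] [IsScalarTower ℂ ℂ[G] M] [IsSimpleModule ℂ[G] M] : IrrFRep G where
  V := M
  ρ := ofModule' M
  irr := repIsIrreducible_ofModule'

variable [Fintype G]

theorem eq_zero_of_forall_asAlgebraHom_eq_zero (z : ℂ[G])
    (h : ∀ X : IrrFRep G, X.ρ.asAlgebraHom z = 0) : z = 0 := by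
  refine IsSemisimpleRing.eq_zero_of_forall_isSimpleModule_mul_eq_zero z fun I hI x hx => ?_
  have := LinearMap.congr_fun (h (ofSimpleModule I)) ⟨x, hx⟩
  exact congrArg Subtype.val ((asAlgebraHom_ofModule'_apply (M := I) z ⟨x, hx⟩).symm.trans this)

theorem eq_zero_of_forall_sum_mul_character_eq_zero (f : G → ℂ)
    (hf : ∀ g h, f (h * g * h⁻¹) = f g)
    (h : ∀ X : IrrFRep G, ∑ g, f g * X.ρ.character g = 0) : f = 0 := by
  have hz := eq_zero_of_forall_asAlgebraHom_eq_zero (∑ g, f g • MonoidAlgebra.of ℂ G g) fun X => by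
    simpa [map_sum, asAlgebraHom_of] using X.ρ.sum_smul_eq_zero_of_sum_mul_character_eq_zero f hf (h X)
  classical
  funext a
  simpa [MonoidAlgebra.coeff_sum, Finsupp.single_apply] using congrArg (MonoidAlgebra.coeff · a) hz

end IrrFRep

abbrev IrrClass (G : Type) [Group G] := Quot (repEquivRel (G := G))

section ConjugationCount

variable {G : Type*} [Group G] [Fintype G] [DecidableEq G]

theorem card_conj_conj (a x h : G) :
    #{g | g * a * g⁻¹ = h * x * h⁻¹} = #{g | g * a * g⁻¹ = x} := by
  refine card_equiv (Equiv.mulLeft h⁻¹) fun g => ?_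
  simp only [mem_filter, mem_univ, true_and, Equiv.coe_mulLeft,
    show h⁻¹ * g * a * (h⁻¹ * g)⁻¹ = h⁻¹ * (g * a * g⁻¹) * h by group]
  constructor
  · intro hg; rw [hg]; group
  · intro hg; rw [← hg]; group

theorem sum_card_conj_mul_of_conj_invariant {R : Type*} [Semiring R] (a : G) (ψ : G → R)
    (hψ : ∀ g h, ψ (h * g * h⁻¹) = ψ g) :
    ∑ x, (#{g | g * a * g⁻¹ = x} : R) * ψ x = Nat.card G * ψ a := by
  simp_rw [card_filter, Nat.cast_sum, sum_mul]
  rw [sum_comm]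
  simp [hψ]

end ConjugationCount

namespace IrrClass

variable {G : Type} [Group G]

noncomputable def character : IrrClass G → G → ℂ :=
  Quot.lift (fun X => X.ρ.character) fun _ _ h =>
    char_iso (Classical.choice (IrrFRep.repEquivRel_iff.1 h))

@[simp]
theorem character_mk (X : IrrFRep G) : character (Quot.mk _ X) = X.ρ.character := rfl

theorem character_conj (c : IrrClass G) (g h : G) : c.character (h * g * h⁻¹) = c.character g := by
  induction c using Quot.ind
  exact char_conj _ g h

variable [Fintype G]

open scoped Classical in
theorem sum_character_mul_character_inv (c d : IrrClass G) :
    ∑ g, c.character g * d.character g⁻¹ = Nat.card G * if d = c then 1 else 0 := by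
  induction c using Quot.ind with | _ X => ?_
  induction d using Quot.ind with | _ Y => ?_
  have hG : (Nat.card G : ℂ) ≠ 0 := Nat.cast_ne_zero.mpr Nat.card_pos.ne'
  have := invertibleOfNonzero hG
  have h := char_orthonormal X.ρ Y.ρ
  rw [inv_mul_eq_iff_eq_mul₀ hG] at h
  simp only [character_mk, h, IrrFRep.mk_eq_mk_iff, IrrFRep.repEquivRel_iff]

theorem linearIndependent_character : LinearIndependent ℂ (character : IrrClass G → G → ℂ) := by
  refine LinearMap.BilinForm.linearIndependent_of_iIsOrtho
    (B := (dotProductBilin ℂ ℂ).compl₂ (LinearMap.funLeft ℂ ℂ fun g : G => g⁻¹)) ?_ fun c => ?_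
  · intro c d hcd
    exact (sum_character_mul_character_inv c d).trans (by simp [hcd.symm])
  · exact (sum_character_mul_character_inv c c).trans_ne (by simp)

instance : Finite (IrrClass G) := linearIndependent_character.finite

noncomputable instance : Fintype (IrrClass G) := Fintype.ofFinite _

theorem sum_sum_character_mul_character (a : G) (X : IrrFRep G) :
    ∑ x, (∑ c : IrrClass G, c.character a * c.character x⁻¹) * X.ρ.character x =
      Nat.card G * X.ρ.character a := by
  classical
  calc ∑ x, (∑ c : IrrClass G, c.character a * c.character x⁻¹) * X.ρ.character x
      = ∑ c : IrrClass G, c.character a * ∑ x, character (Quot.mk _ X) x * c.character x⁻¹ := by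
        simp_rw [sum_mul, mul_sum]
        rw [sum_comm]
        exact sum_congr rfl fun _ _ => sum_congr rfl fun _ _ => by rw [character_mk]; ring
    _ = ∑ c : IrrClass G, c.character a * (Nat.card G * if c = Quot.mk _ X then 1 else 0) :=
        sum_congr rfl fun c _ => by rw [sum_character_mul_character_inv]
    _ = Nat.card G * X.ρ.character a := by simp [mul_comm]

theorem card_conj_eq_sum_character_mul_character_inv [DecidableEq G] (a b : G) :
    (#{g | g * a * g⁻¹ = b} : ℂ) = ∑ c : IrrClass G, c.character a * c.character b⁻¹ := by
  have h := IrrFRep.eq_zero_of_forall_sum_mul_character_eq_zero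
    (fun x => (#{g | g * a * g⁻¹ = x} : ℂ) - ∑ c : IrrClass G, c.character a * c.character x⁻¹)
    (fun x h => by
      simp only [card_conj_conj, show (h * x * h⁻¹)⁻¹ = h * x⁻¹ * h⁻¹ by group, character_conj])
    (fun X => by
      simp only [sub_mul, sum_sub_distrib, sum_card_conj_mul_of_conj_invariant a _ (char_conj X.ρ),
        sum_sum_character_mul_character, sub_self])
  exact sub_eq_zero.mp (congrFun h b)

open scoped Classical in
theorem sum_character_comp_mul_character_inv (φ : G →* G) (c : IrrClass G) :
    ∑ g, c.character (φ g) * c.character g⁻¹ = Nat.card G *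
      if ∃ X : IrrFRep G, Quot.mk _ X = c ∧
          ∃ T : X.V ≃ₗ[ℂ] X.V, ∀ (g : G) (v : X.V), T (X.ρ (φ g) v) = X.ρ g (T v)
      then 1 else 0 := by
  induction c using Quot.ind with | _ X => ?_
  have hG : (Nat.card G : ℂ) ≠ 0 := Nat.cast_ne_zero.mpr Nat.card_pos.ne'
  have := invertibleOfNonzero hG
  have h := card_inv_mul_sum_char_mul_char_of_finrank_eq X.ρ (X.ρ.comp φ) rfl
  rw [inv_mul_eq_iff_eq_mul₀ hG] at h
  rw [character_mk]
  have hfixed : (∃ Y : IrrFRep G, (Quot.mk _ Y : IrrClass G) = Quot.mk _ X ∧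
      ∃ T : Y.V ≃ₗ[ℂ] Y.V, ∀ (g : G) (v : Y.V), T (Y.ρ (φ g) v) = Y.ρ g (T v)) ↔
      Nonempty (Representation.Equiv (X.ρ.comp φ) X.ρ) := by
    refine ⟨fun ⟨Y, hY, hT⟩ => ?_, fun h => ⟨X, rfl, nonempty_equiv_iff.1 h⟩⟩
    obtain ⟨e⟩ := IrrFRep.repEquivRel_iff.1 (IrrFRep.mk_eq_mk_iff.1 hY)
    obtain ⟨t⟩ := (nonempty_equiv_iff (ρ := Y.ρ.comp φ) (σ := Y.ρ)).2 hT
    exact ⟨((e.symm.comp φ).trans t).trans e⟩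
  rw [hfixed]
  exact h

end IrrClass

section TwistedConjugation

variable {G : Type*} [Group G]

def TwistedConjAct (_φ : G →* G) : Type _ := G

def toTwistedConjAct (φ : G →* G) : G ≃ TwistedConjAct φ := Equiv.refl G

instance (φ : G →* G) : MulAction G (TwistedConjAct φ) where
  smul x g := toTwistedConjAct φ (x * (toTwistedConjAct φ).symm g * (φ x)⁻¹)
  one_smul g := by simp [HSMul.hSMul]
  mul_smul x y g := by simp [HSMul.hSMul, mul_assoc]

theorem toTwistedConjAct_smul (φ : G →* G) (x g : G) :
    x • toTwistedConjAct φ g = toTwistedConjAct φ (x * g * (φ x)⁻¹) := rfl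

theorem card_quot_twistedConj_mul_card [Fintype G] [DecidableEq G] (φ : G →* G) :
    Nat.card (Quot (twistedConj φ)) * Nat.card G = ∑ x, #{g | g * φ x * g⁻¹ = x} := by
  classical
  have : Fintype (TwistedConjAct φ) := inferInstanceAs (Fintype G)
  have e : Quot (twistedConj φ) ≃ MulAction.orbitRel.Quotient G (TwistedConjAct φ) :=
    Quot.congr (toTwistedConjAct φ) fun a b =>
      ⟨fun ⟨x, hx⟩ => ⟨x, hx ▸ rfl⟩, fun ⟨x, hx⟩ => ⟨x, ((toTwistedConjAct φ).injective hx).symm⟩⟩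
  have hfix (x : G) :
      Fintype.card (MulAction.fixedBy (TwistedConjAct φ) x) = #{g | g * φ x * g⁻¹ = x} := by
    rw [← Fintype.card_subtype]
    refine Fintype.card_congr ((toTwistedConjAct φ).subtypeEquiv fun g => ?_).symm
    rw [MulAction.mem_fixedBy, toTwistedConjAct_smul, (toTwistedConjAct φ).apply_eq_iff_eq,
      mul_inv_eq_iff_eq_mul, mul_inv_eq_iff_eq_mul, eq_comm]
  rw [Nat.card_congr e, Nat.card_eq_fintype_card, Nat.card_eq_fintype_card,
    ← MulAction.sum_card_fixedBy_eq_card_orbits_mul_card_group]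
  simp_rw [hfix]

end TwistedConjugation

/-- Twisted Burnside–Frobenius theorem for a finite group: the Reidemeister
number of `φ` equals the number of equivalence classes of irreducible complex
representations `ρ` with `ρ ∘ φ` equivalent to `ρ`. -/
theorem stmt10 {G : Type} [Group G] [Finite G] (φ : G →* G) :
    Nat.card (Quot (twistedConj φ)) =
      Nat.card {c : Quot (repEquivRel (G := G)) //
        ∃ X : IrrFRep G, Quot.mk _ X = c ∧
          ∃ T : X.V ≃ₗ[ℂ] X.V, ∀ (g : G) (v : X.V), T (X.ρ (φ g) v) = X.ρ g (T v)} := by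
  classical
  have := Fintype.ofFinite G
  have hG : (Nat.card G : ℂ) ≠ 0 := Nat.cast_ne_zero.mpr Nat.card_pos.ne'
  refine Nat.cast_injective (R := ℂ) (mul_right_cancel₀ hG ?_)
  calc (Nat.card (Quot (twistedConj φ)) : ℂ) * Nat.card G
      = ∑ x, (#{g | g * φ x * g⁻¹ = x} : ℂ) := by
        exact_mod_cast card_quot_twistedConj_mul_card φ
    _ = ∑ c : IrrClass G, ∑ x, c.character (φ x) * c.character x⁻¹ := by
        rw [sum_congr rfl fun x _ => IrrClass.card_conj_eq_sum_character_mul_character_inv (φ x) x]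
        exact sum_comm
    _ = _ := by
        rw [sum_congr rfl fun c _ => IrrClass.sum_character_comp_mul_character_inv φ c, ← mul_sum,
          sum_boole, mul_comm, ← Fintype.card_subtype, ← Nat.card_eq_fintype_card]
end

section
/- Let φ: G → G be an endomorphism with R(φ) < ∞ such that the set of right translates {C·g : C a Reidemeister class of φ, g ∈ G} is finite. Then there exists a normal subgroup H of finite index in G such that every Reidemeister class of φ is a union of cosets of H. -/
open MulOpposite Pointwise

theorem SubMulAction.exists_normal_finiteIndex_forall_smul_eq {G M α : Type*} [Group G] [Group M]
    [MulAction M α] (f : G →* M) (p : SubMulAction M α) [Finite p] :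
    ∃ H : Subgroup G, H.Normal ∧ H.FiniteIndex ∧ ∀ h ∈ H, ∀ x ∈ p, f h • x = x :=
  ⟨((MulAction.toPermHom M p).comp f).ker, inferInstance, inferInstance,
    fun _ hh x hx => congrArg Subtype.val (Equiv.ext_iff.mp (MonoidHom.mem_ker.mp hh) ⟨x, hx⟩)⟩

theorem exists_normal_finiteIndex_forall_op_smul_eq {G : Type*} [Group G] (T : Set (Set G))
    (hT : T.Finite) (hsmul : ∀ s ∈ T, ∀ g : G, op g • s ∈ T) :
    ∃ H : Subgroup G, H.Normal ∧ H.FiniteIndex ∧ ∀ h ∈ H, ∀ s ∈ T, op h • s = s := by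
  let p : SubMulAction Gᵐᵒᵖ (Set G) := ⟨T, fun g s hs => hsmul s hs g.unop⟩
  have : Finite p := hT.to_subtype
  obtain ⟨H, hnormal, hindex, hfix⟩ :=
    p.exists_normal_finiteIndex_forall_smul_eq (MulEquiv.inv' G).toMonoidHom
  exact ⟨H, hnormal, hindex, fun h hh s hs => by simpa using hfix h⁻¹ (H.inv_mem hh) s hs⟩

theorem image_mul_right_eq_op_smul {G : Type*} [Group G] (g : G) (s : Set G) :
    (fun x => x * g) '' s = op g • s := by
  simp only [← Set.image_smul, op_smul_eq_mul]

theorem twistedConj_refl {G : Type*} [Group G] (φ : G →* G) (a : G) : twistedConj φ a a :=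
  ⟨1, by simp⟩

theorem stmt13_general {G : Type*} [Group G] (φ : G →* G)
    (hsh : {s : Set G | ∃ c g : G, s = (fun x => x * g) '' {a | twistedConj φ a c}}.Finite) :
    ∃ H : Subgroup G, H.Normal ∧ H.FiniteIndex ∧
      ∀ a : G, ∀ h ∈ H, twistedConj φ (a * h) a := by
  simp only [image_mul_right_eq_op_smul] at hsh
  set T : Set (Set G) := {s | ∃ c g : G, s = op g • {a | twistedConj φ a c}}
  have hsmul : ∀ s ∈ T, ∀ g' : G, op g' • s ∈ T := by
    rintro _ ⟨c, g, rfl⟩ g'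
    exact ⟨c, g * g', by rw [smul_smul, op_mul]⟩
  obtain ⟨H, hnormal, hindex, hfix⟩ := exists_normal_finiteIndex_forall_op_smul_eq T hsh hsmul
  refine ⟨H, hnormal, hindex, fun a h hh => ?_⟩
  have hclass : op h • {b | twistedConj φ b a} = {b | twistedConj φ b a} :=
    hfix h hh _ ⟨a, 1, by rw [op_one, one_smul]⟩
  show a * h ∈ {b | twistedConj φ b a}
  rw [← hclass]
  exact ⟨a, twistedConj_refl φ a, op_smul_eq_mul h a⟩

/-- If `R(φ) < ∞` and the set of right translates of the Reidemeister classes of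
`φ` is finite, then there is a finite-index normal subgroup `H` such that every
Reidemeister class of `φ` is a union of `H`-cosets. -/
theorem stmt13 {G : Type*} [Group G] (φ : G →* G)
    (hR : Finite (Quot (twistedConj φ)))
    (hsh : {s : Set G | ∃ c g : G, s = (fun x => x * g) '' {a | twistedConj φ a c}}.Finite) :
    ∃ H : Subgroup G, H.Normal ∧ H.FiniteIndex ∧
      ∀ a : G, ∀ h ∈ H, twistedConj φ (a * h) a :=
  stmt13_general φ hsh
end

section
/- Let G be a group with finitely many inner automorphisms (i.e., G/Z(G) finite) and φ: G → G an endomorphism with finite Reidemeister number. Then there exists a finite group F and an epimorphism p: G → F such that distinct Reidemeister classes of φ map to disjoint subsets of F. -/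
section FiniteOrbit

attribute [local instance] arrowAction

theorem exists_normal_finiteIndex_of_finite_translates {G α : Type*} [Group G] (f : G → α)
    (hf : (Set.range fun g : G => fun x => f (g * x)).Finite) :
    ∃ N : Subgroup G, N.Normal ∧ N.FiniteIndex ∧ ∀ n ∈ N, ∀ x, f (n * x) = f x := by
  have horbit : (MulAction.orbit G f).Finite :=
    hf.subset <| by rintro _ ⟨g, rfl⟩; exact ⟨g⁻¹, rfl⟩
  have : (MulAction.stabilizer G f).FiniteIndex :=
    ⟨by
      rw [MulAction.index_stabilizer]
      exact ((Set.ncard_pos horbit).mpr ⟨f, MulAction.mem_orbit_self f⟩).ne'⟩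
  refine ⟨(MulAction.stabilizer G f).normalCore, Subgroup.normalCore_normal _, inferInstance,
    fun n hn x => ?_⟩
  have hinv : n⁻¹ • f = f :=
    (MulAction.stabilizer G f).inv_mem (Subgroup.normalCore_le _ hn)
  have h : f (n⁻¹⁻¹ * x) = f x := congrFun hinv x
  rwa [inv_inv] at h

end FiniteOrbit

theorem Subgroup.exists_surjective_ker_eq_of_finiteIndex {G : Type*} [Group G] (N : Subgroup G)
    [N.Normal] [N.FiniteIndex] :
    ∃ (F : Type) (_ : Group F), Finite F ∧
      ∃ p : G →* F, Function.Surjective p ∧ p.ker = N := by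
  have : Finite (G ⧸ N) := Subgroup.finite_quotient_of_finiteIndex
  let iso : G ⧸ N ≃* Shrink.{0} (G ⧸ N) := Shrink.mulEquiv.symm
  refine ⟨Shrink.{0} (G ⧸ N), inferInstance, inferInstance,
    iso.toMonoidHom.comp (QuotientGroup.mk' N),
    iso.surjective.comp (QuotientGroup.mk'_surjective N), ?_⟩
  rw [MonoidHom.ker_comp_of_injective _ _ iso.injective, QuotientGroup.ker_mk']

section TwistedConj

variable {G : Type*} [Group G] (φ : G →* G)

theorem twistedConj_equivalence : Equivalence (twistedConj φ) where
  refl _ := ⟨1, by simp⟩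
  symm := by
    rintro _ b ⟨x, rfl⟩
    exact ⟨x⁻¹, by simp [mul_assoc]⟩
  trans := by
    rintro _ _ _ ⟨x, rfl⟩ ⟨y, rfl⟩
    exact ⟨x * y, by simp [mul_assoc]⟩

variable {φ}

theorem twistedConj.mul_left_of_mem_center {a b c : G} (h : twistedConj φ a b)
    (hc : c ∈ Subgroup.center G) : twistedConj φ (c * a) (c * b) := by
  obtain ⟨x, rfl⟩ := h
  refine ⟨x, ?_⟩
  rw [← mul_assoc, ← mul_assoc, ← mul_assoc, Subgroup.mem_center_iff.mp hc x]

theorem finite_translates_twistedConj_class (hinn : Finite (G ⧸ Subgroup.center G))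
    (hR : Finite (Quot (twistedConj φ))) :
    (Set.range fun g : G => fun x => Quot.mk (twistedConj φ) (g * x)).Finite := by
  let Q := Quot (twistedConj φ)
  refine (Set.finite_range fun p : (G ⧸ Subgroup.center G) × (Q → Q) =>
    fun x => p.2 (Quot.mk _ (p.1.out * x))).subset ?_
  rintro _ ⟨g, rfl⟩
  obtain ⟨⟨c, hc⟩, hgc⟩ := QuotientGroup.mk_out_eq_mul (Subgroup.center G) g
  have hc' : c⁻¹ ∈ Subgroup.center G := inv_mem hc
  refine ⟨(g, Quot.map (c⁻¹ * ·) fun _ _ h => h.mul_left_of_mem_center hc'),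
    funext fun x => ?_⟩
  show Quot.mk _ (c⁻¹ * ((g : G ⧸ Subgroup.center G).out * x)) = Quot.mk _ (g * x)
  rw [hgc, ← mul_assoc, ← mul_assoc, ← Subgroup.mem_center_iff.mp hc' g, mul_assoc g,
    inv_mul_cancel, mul_one]

end TwistedConj

/-- If `G` has finitely many inner automorphisms (`G/Z(G)` finite) and
`R(φ) < ∞`, then there is an epimorphism onto a finite group under which
distinct Reidemeister classes of `φ` have disjoint images. -/
theorem stmt14 {G : Type*} [Group G] (φ : G →* G)
    (hinn : Finite (G ⧸ Subgroup.center G))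
    (hR : Finite (Quot (twistedConj φ))) :
    ∃ (F : Type) (_ : Group F), Finite F ∧
      ∃ p : G →* F, Function.Surjective p ∧
        ∀ a b : G, p a = p b → twistedConj φ a b := by
  obtain ⟨N, hNormal, hIndex, hN⟩ := exists_normal_finiteIndex_of_finite_translates _
    (finite_translates_twistedConj_class hinn hR)
  obtain ⟨F, _, hF, p, hp, hker⟩ := N.exists_surjective_ker_eq_of_finiteIndex
  refine ⟨F, _, hF, p, hp, fun a b hab => ?_⟩
  have hba : b * a⁻¹ ∈ N := by
    rw [← hker, MonoidHom.mem_ker, map_mul, map_inv, hab, mul_inv_cancel]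
  have hclass := hN _ hba a
  rw [inv_mul_cancel_right, Quot.eq, (twistedConj_equivalence φ).eqvGen_iff] at hclass
  exact (twistedConj_equivalence φ).symm hclass
end

section
/- Let φ be an endomorphism of a finitely generated abelian group A with finite Reidemeister number. Then the subgroup of fixed points of φ is finite. -/
/-!
Written additively, the twisted conjugacy classes of `φ` map onto the cokernel of `ψ = id - φ`,
and the fixed points of `φ` form the kernel of `ψ`. By rank–nullity over `ℤ`, an endomorphism of a
finitely generated abelian group with finite cokernel has a kernel of rank zero, i.e. a torsion
kernel; being finitely generated, that kernel is finite.
-/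

universe u v

theorem LinearMap.rank_ker_eq_zero_of_rank_quotient_range_eq_zero {R : Type u} {M : Type v}
    [Ring R] [StrongRankCondition R] [HasRankNullity.{v} R] [AddCommGroup M] [Module R M]
    [Module.Finite R M] (f : M →ₗ[R] M) (h : Module.rank R (M ⧸ LinearMap.range f) = 0) :
    Module.rank R (LinearMap.ker f) = 0 := by
  have hrange : Module.rank R (LinearMap.range f) = Module.rank R M := by
    simpa [h] using Submodule.rank_quotient_add_rank (LinearMap.range f)
  refine Cardinal.eq_of_add_eq_add_left ?_ (Module.rank_lt_aleph0 R M)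
  simpa [hrange] using f.rank_range_add_rank_ker

theorem AddMonoidHom.finite_ker_of_finite_quotient_range {M : Type*} [AddCommGroup M]
    [AddGroup.FG M] (f : M →+ M) [Finite (M ⧸ f.range)] : Finite f.ker := by
  have : Module.Finite ℤ M := Module.Finite.iff_addGroup_fg.mpr ‹_›
  have hcoker : Module.rank ℤ (M ⧸ LinearMap.range f.toIntLinearMap) = 0 :=
    Module.rank_eq_zero_iff_isTorsion.mpr (isAddTorsion_iff_isTorsion_int.mp
      (isAddTorsion_of_finite (G := M ⧸ f.range)))
  have hker : IsAddTorsion f.ker := isAddTorsion_iff_isTorsion_int.mpr <|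
    Module.rank_eq_zero_iff_isTorsion.mp
      (f.toIntLinearMap.rank_ker_eq_zero_of_rank_quotient_range_eq_zero hcoker)
  have : AddGroup.FG f.ker :=
    Module.Finite.iff_addGroup_fg.mp
      (inferInstanceAs (Module.Finite ℤ (LinearMap.ker f.toIntLinearMap)))
  exact AddCommGroup.finite_of_fg_isAddTorsion _ hker

theorem MonoidHom.finite_ker_of_finite_quotient_range {G : Type*} [CommGroup G]
    [Group.FG G] (f : G →* G) [Finite (G ⧸ f.range)] : Finite f.ker :=
  have : Finite (Additive G ⧸ f.toAdditive.range) := ‹Finite (G ⧸ f.range)›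
  AddMonoidHom.finite_ker_of_finite_quotient_range (M := Additive G) f.toAdditive

theorem twistedConj.div_mem_range {A : Type*} [CommGroup A] {φ : A →* A} {a b : A}
    (h : twistedConj φ a b) : a / b ∈ (MonoidHom.id A / φ).range := by
  obtain ⟨x, rfl⟩ := h
  exact ⟨x, by simp [div_eq_mul_inv, mul_right_comm]⟩

theorem finite_quotient_range_of_finite_quot_twistedConj {A : Type*} [CommGroup A] (φ : A →* A)
    [Finite (Quot (twistedConj φ))] : Finite (A ⧸ (MonoidHom.id A / φ).range) :=
  .of_surjective (Quot.lift QuotientGroup.mk fun _ _ h =>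
    QuotientGroup.eq_iff_div_mem.mpr (twistedConj.div_mem_range h))
    (QuotientGroup.mk_surjective.forall.mpr fun a => ⟨Quot.mk _ a, rfl⟩)

/-- An endomorphism of a finitely generated abelian group with finite
Reidemeister number has a finite set of fixed points. -/
theorem stmt16 {A : Type*} [CommGroup A] [Group.FG A] (φ : A →* A)
    (hR : Finite (Quot (twistedConj φ))) :
    {a : A | φ a = a}.Finite := by
  have := finite_quotient_range_of_finite_quot_twistedConj φ
  have := (MonoidHom.id A / φ).finite_ker_of_finite_quotient_range
  refine (Set.toFinite ((MonoidHom.id A / φ).ker : Set A)).subset fun a (ha : φ a = a) => ?_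
  simp [ha]
end

section
/- Let φ: G → G be an endomorphism, H a normal φ-invariant subgroup, and suppose the set of fixed points of the induced endomorphism on G/H is finite of cardinality c. Then R(φ|_H) ≤ R(φ)·c. -/
namespace TwistedConj

variable {G : Type*} [Group G]

theorem equivalence (φ : G →* G) : Equivalence (twistedConj φ) where
  refl a := ⟨1, by simp⟩
  symm := by
    rintro a b ⟨x, rfl⟩
    exact ⟨x⁻¹, by rw [map_inv]; group⟩
  trans := by
    rintro a b c ⟨x, rfl⟩ ⟨y, rfl⟩
    exact ⟨x * y, by rw [map_mul]; group⟩

theorem quot_mk_eq_iff (φ : G →* G) {a b : G} :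
    Quot.mk (twistedConj φ) a = Quot.mk (twistedConj φ) b ↔ twistedConj φ a b :=
  Quot.eq.trans (equivalence φ).eqvGen_iff

variable (φ : G →* G) (H : Subgroup G) (ψ : H →* H)

theorem of_mem (hψ : ∀ h : H, (ψ h : G) = φ h) {a b : H} {x : G} (hx : x ∈ H)
    (h : (a : G) = x * b * (φ x)⁻¹) :
    twistedConj ψ a b :=
  ⟨⟨x, hx⟩, Subtype.ext (by simpa [hψ] using h)⟩

variable (hψ : ∀ h : H, (ψ h : G) = φ h)

def inclClass : Quot (twistedConj ψ) → Quot (twistedConj φ) :=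
  Quot.map Subtype.val fun _ _ ⟨x, hx⟩ => ⟨x, by rw [hx]; simp [hψ]⟩

variable [H.Normal] (hinv : H ≤ H.comap φ)

theorem map_mk_eq_self_iff (x : G) :
    QuotientGroup.map H H φ hinv (x : G ⧸ H) = x ↔ x * (φ x)⁻¹ ∈ H := by
  rw [QuotientGroup.map_mk, QuotientGroup.eq, ‹H.Normal›.mem_comm_iff]

theorem mul_mul_inv_map_mem_iff {h : G} (hh : h ∈ H) (x : G) :
    x * h * (φ x)⁻¹ ∈ H ↔ x * (φ x)⁻¹ ∈ H := by
  have hconj : x * h * x⁻¹ ∈ H := ‹H.Normal›.conj_mem h hh x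
  rw [show x * h * (φ x)⁻¹ = x * h * x⁻¹ * (x * (φ x)⁻¹) by group]
  exact H.mul_mem_cancel_left hconj

noncomputable def translateClass (h₀ : H)
    (q : {q : G ⧸ H // QuotientGroup.map H H φ hinv q = q}) : Quot (twistedConj ψ) :=
  Quot.mk _ ⟨q.1.out * h₀ * (φ q.1.out)⁻¹, (mul_mul_inv_map_mem_iff φ H h₀.2 _).2 <|
    (map_mk_eq_self_iff φ H hinv _).1 (by rw [QuotientGroup.out_eq']; exact q.2)⟩

theorem inclClass_preimage_subset_range_translateClass (h₀ : H) :
    inclClass φ H ψ hψ ⁻¹' {Quot.mk _ (h₀ : G)} ⊆ Set.range (translateClass φ H ψ hinv h₀) := by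
  intro q hq
  induction q using Quot.ind with | mk h => ?_
  obtain ⟨x, hx⟩ := (quot_mk_eq_iff φ).1 hq
  have hfixed : QuotientGroup.map H H φ hinv (x : G ⧸ H) = x :=
    (map_mk_eq_self_iff φ H hinv x).2 <|
      (mul_mul_inv_map_mem_iff φ H h₀.2 x).1 (hx ▸ h.2)
  refine ⟨⟨x, hfixed⟩, Quot.sound ?_⟩
  have hyx : (x : G ⧸ H).out * x⁻¹ ∈ H := by
    rw [‹H.Normal›.mem_comm_iff, ← QuotientGroup.eq, QuotientGroup.out_eq']
  refine of_mem φ H ψ hψ hyx ?_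
  rw [hx, map_mul, map_inv]
  group

theorem mk_inclClass_preimage_le (b : Quot (twistedConj φ)) :
    Cardinal.mk (inclClass φ H ψ hψ ⁻¹' {b}) ≤
      Cardinal.mk {q : G ⧸ H // QuotientGroup.map H H φ hinv q = q} := by
  rcases (inclClass φ H ψ hψ ⁻¹' {b}).eq_empty_or_nonempty with hempty | ⟨q, hq⟩
  · simp [hempty]
  induction q using Quot.ind with | mk h₀ => ?_
  obtain rfl : Quot.mk _ (h₀ : G) = b := hq
  exact (Cardinal.mk_le_mk_of_subset
    (inclClass_preimage_subset_range_translateClass φ H ψ hψ hinv h₀)).trans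
    Cardinal.mk_range_le

end TwistedConj

open TwistedConj in
/-- If the induced endomorphism on `G/H` has finitely many fixed points, `c` of
them, then `R(φ|_H) ≤ R(φ) · c`. -/
theorem stmt17 {G : Type*} [Group G] (φ : G →* G) (H : Subgroup G) [H.Normal]
    (hinv : H ≤ H.comap φ) (ψ : H →* H) (hψ : ∀ h : H, (ψ h : G) = φ h)
    (c : ℕ)
    (hfin : Finite {q : G ⧸ H // QuotientGroup.map H H φ hinv q = q})
    (hc : Nat.card {q : G ⧸ H // QuotientGroup.map H H φ hinv q = q} = c) :
    Cardinal.mk (Quot (twistedConj ψ)) ≤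
      Cardinal.mk (Quot (twistedConj φ)) * (c : Cardinal) := by
  rw [← hc, Nat.cast_card]
  exact Cardinal.mk_le_mk_mul_of_mk_preimage_le (inclClass φ H ψ hψ)
    (mk_inclClass_preimage_le φ H ψ hψ hinv)
end
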